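/- Let d ≥ 1 and let 0 < p ≤ r ≤ q ≤ ∞. Suppose that (i) ‖P₊g‖_{L^r(𝕋)} ≤ ‖g‖_{L^q(𝕋)} for every trigonometric polynomial g on 𝕋, and (ii) ‖P₊h‖_{L^p(𝕋^d)} ≤ ‖h‖_{L^r(𝕋^d)} for every trigonometric polynomial h on 𝕋^d. Then ‖P₊ψ‖_{L^p(𝕋^{d+1})} ≤ ‖ψ‖_{L^q(𝕋^{d+1})} for every trigonometric polynomial ψ on 𝕋^{d+1}. (This yields the critical exponent inequality 𝔭_{d+1}(q) ≥ 𝔭_d(𝔭₁(q)).) -/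

import Mathlib

open MeasureTheory Real Complex AddCircle
open scoped ENNReal

noncomputable section

instance : Fact (0 < 2 * Real.pi) := ⟨by positivity⟩

/-- The `d`-torus `𝕋^d`. -/
abbrev Td (d : ℕ) := Fin d → AddCircle (2 * Real.pi)

/-- Normalized Haar (Lebesgue) measure on the `d`-torus. -/
def muTd (d : ℕ) : Measure (Td d) :=
  Measure.pi fun _ => (haarAddCircle : Measure (AddCircle (2 * Real.pi)))

/-- The trigonometric polynomial on `𝕋^d` with (finitely supported) coefficients `c`,
namely `x ↦ ∑_α c(α) e^{i(α₁θ₁ + ⋯ + α_dθ_d)}`. -/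
def trigPoly {d : ℕ} (c : (Fin d → ℤ) →₀ ℂ) : Td d → ℂ := fun x =>
  ∑ α ∈ c.support, c α * ∏ i, fourier (α i) (x i)

/-- The Riesz projection on coefficients: keep only the multi-indices all of whose
components are nonnegative. -/
def rieszCoeff {d : ℕ} (c : (Fin d → ℤ) →₀ ℂ) : (Fin d → ℤ) →₀ ℂ :=
  c.filter fun α => ∀ i, 0 ≤ α i

/-!
Write `ψ(t, y)` with `t ∈ 𝕋`, `y ∈ 𝕋^d`, and let `Φ` be the Riesz projection of `ψ` in `t` alone.
Then `P₊ψ` is the Riesz projection of `Φ` in `y`, so for each fixed `t` hypothesis (ii) gives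
`‖P₊ψ(t, ·)‖_p ≤ ‖Φ(t, ·)‖_r`, and for each fixed `y` hypothesis (i) gives
`‖Φ(·, y)‖_r ≤ ‖ψ(·, y)‖_q`. Slicewise bounds `‖G(a, ·)‖_p ≤ ‖F(a, ·)‖_r` integrate to
`‖G‖_p ≤ ‖F‖_r` on a product with a probability space when `p ≤ r`: by Tonelli `‖G‖_p` is the
`L^p` norm of `a ↦ ‖G(a, ·)‖_p`, and the `L^p` norm of `a ↦ ‖F(a, ·)‖_r` is at most its `L^r`
norm, which is `‖F‖_r`.
-/

namespace MeasureTheory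

variable {α β ε : Type*} [MeasurableSpace α] [MeasurableSpace β]
  [TopologicalSpace ε] [ContinuousENorm ε]
  {μ : Measure α} {ν : Measure β}

theorem eLpNorm_prod_eq_eLpNorm_eLpNorm_of_ne_top [SFinite ν] {F : α × β → ε}
    (hF : StronglyMeasurable F) {p : ℝ≥0∞} (hp : p ≠ ∞) :
    eLpNorm F p (μ.prod ν) = eLpNorm (fun a => eLpNorm (fun b => F (a, b)) p ν) p μ := by
  rcases eq_or_ne p 0 with rfl | hp0
  · simp
  have hp' : p.toReal ≠ 0 := ENNReal.toReal_ne_zero.mpr ⟨hp0, hp⟩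
  simp_rw [eLpNorm_eq_lintegral_rpow_enorm_toReal hp0 hp, enorm_eq_self, ← ENNReal.rpow_mul,
    one_div_mul_cancel hp', ENNReal.rpow_one]
  rw [lintegral_prod _ (hF.enorm.pow_const _).aemeasurable]

theorem eLpNorm_top_prod_eq_eLpNorm_eLpNorm [SFinite ν] {F : α × β → ε}
    (hF : StronglyMeasurable F) :
    eLpNorm F ∞ (μ.prod ν) = eLpNorm (fun a => eLpNorm (fun b => F (a, b)) ∞ ν) ∞ μ := by
  simp_rw [eLpNorm_exponent_top, eLpNormEssSup, enorm_eq_self]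
  apply le_antisymm
  · set M := essSup (fun a => essSup (fun b => ‖F (a, b)‖ₑ) ν) μ
    have hslice : ∀ᵐ a ∂μ, ∀ᵐ b ∂ν, ‖F (a, b)‖ₑ ≤ M := by
      filter_upwards [ENNReal.ae_le_essSup (fun a => essSup (fun b => ‖F (a, b)‖ₑ) ν)] with a ha
      filter_upwards [ENNReal.ae_le_essSup (fun b => ‖F (a, b)‖ₑ)] with b hb
      exact hb.trans ha
    exact essSup_le_of_ae_le _ <|
      (Measure.ae_prod_iff_ae_ae (measurableSet_le hF.enorm measurable_const)).mpr hslice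
  · refine essSup_le_of_ae_le _ ?_
    filter_upwards [Measure.ae_ae_of_ae_prod (ENNReal.ae_le_essSup (μ := μ.prod ν) (‖F ·‖ₑ))]
      with a ha
    exact essSup_le_of_ae_le _ ha

theorem eLpNorm_prod_eq_eLpNorm_eLpNorm [SFinite ν] {F : α × β → ε}
    (hF : StronglyMeasurable F) (p : ℝ≥0∞) :
    eLpNorm F p (μ.prod ν) = eLpNorm (fun a => eLpNorm (fun b => F (a, b)) p ν) p μ := by
  rcases eq_or_ne p ∞ with rfl | hp
  · exact eLpNorm_top_prod_eq_eLpNorm_eLpNorm hF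
  · exact eLpNorm_prod_eq_eLpNorm_eLpNorm_of_ne_top hF hp

theorem eLpNorm_eLpNorm_le_of_exponent_le [IsProbabilityMeasure μ] [SFinite ν] {F : α × β → ε}
    (hF : StronglyMeasurable F) {p r : ℝ≥0∞} (hpr : p ≤ r) :
    eLpNorm (fun a => eLpNorm (fun b => F (a, b)) r ν) p μ ≤
      eLpNorm (fun a => eLpNorm (fun b => F (a, b)) r ν) r μ := by
  rcases eq_or_ne r ∞ with rfl | hr
  · -- the slice norms are not known to be measurable here, but the bound by the essential
    -- supremum needs no measurability
    rcases eq_or_ne p 0 with rfl | hp0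
    · simp
    rcases eq_or_ne p ∞ with rfl | hp
    · rfl
    rw [eLpNorm_eq_eLpNorm' hp0 hp, eLpNorm_exponent_top]
    simpa using eLpNorm'_le_eLpNormEssSup_mul_rpow_measure_univ (μ := μ)
      (f := fun a => eLpNorm (fun b => F (a, b)) ∞ ν) (ENNReal.toReal_pos hp0 hp)
  · refine eLpNorm_le_eLpNorm_of_exponent_le hpr (Measurable.aestronglyMeasurable ?_)
    rcases eq_or_ne r 0 with rfl | hr0
    · simp
    simp_rw [eLpNorm_eq_lintegral_rpow_enorm_toReal hr0 hr]
    exact ((hF.enorm.pow_const _).lintegral_prod_right').pow_const _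

theorem eLpNorm_prod_le_of_forall_eLpNorm_le [IsProbabilityMeasure μ] [SFinite ν]
    {F G : α × β → ε} (hF : StronglyMeasurable F) (hG : StronglyMeasurable G) {p r : ℝ≥0∞}
    (hpr : p ≤ r)
    (h : ∀ a, eLpNorm (fun b => G (a, b)) p ν ≤ eLpNorm (fun b => F (a, b)) r ν) :
    eLpNorm G p (μ.prod ν) ≤ eLpNorm F r (μ.prod ν) :=
  calc eLpNorm G p (μ.prod ν)
      = eLpNorm (fun a => eLpNorm (fun b => G (a, b)) p ν) p μ :=
        eLpNorm_prod_eq_eLpNorm_eLpNorm hG p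
    _ ≤ eLpNorm (fun a => eLpNorm (fun b => F (a, b)) r ν) p μ := eLpNorm_mono_enorm h
    _ ≤ eLpNorm (fun a => eLpNorm (fun b => F (a, b)) r ν) r μ :=
        eLpNorm_eLpNorm_le_of_exponent_le hF hpr
    _ = eLpNorm F r (μ.prod ν) := (eLpNorm_prod_eq_eLpNorm_eLpNorm hF r).symm

theorem eLpNorm_prod_le_of_forall_eLpNorm_le' [SFinite μ] [IsProbabilityMeasure ν]
    {F G : α × β → ε} (hF : StronglyMeasurable F) (hG : StronglyMeasurable G) {p r : ℝ≥0∞}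
    (hpr : p ≤ r)
    (h : ∀ b, eLpNorm (fun a => G (a, b)) p μ ≤ eLpNorm (fun a => F (a, b)) r μ) :
    eLpNorm G p (μ.prod ν) ≤ eLpNorm F r (μ.prod ν) := by
  have hswap : MeasurePreserving Prod.swap (ν.prod μ) (μ.prod ν) :=
    Measure.measurePreserving_swap
  rw [← eLpNorm_comp_measurePreserving hG.aestronglyMeasurable hswap,
    ← eLpNorm_comp_measurePreserving hF.aestronglyMeasurable hswap]
  exact eLpNorm_prod_le_of_forall_eLpNorm_le (hF.comp_measurable measurable_swap)
    (hG.comp_measurable measurable_swap) hpr h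

end MeasureTheory

namespace Torus

instance (d : ℕ) : IsProbabilityMeasure (muTd d) := by
  unfold muTd; infer_instance

theorem measurePreserving_cons (d : ℕ) :
    MeasurePreserving (fun z : Td 1 × Td d => (Fin.cons (z.1 0) z.2 : Td (d + 1)))
      ((muTd 1).prod (muTd d)) (muTd (d + 1)) := by
  unfold muTd
  have h := (measurePreserving_piFinSuccAbove
    (fun _ : Fin (d + 1) => (haarAddCircle : Measure (AddCircle (2 * π)))) 0).symm.comp
    ((measurePreserving_funUnique haarAddCircle (Fin 1)).prod (MeasurePreserving.id _))
  convert h using 1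
  · funext z
    simp only [Function.comp_apply, MeasurableEquiv.piFinSuccAbove_symm_apply,
      Fin.insertNthEquiv_zero, MeasurableEquiv.funUnique_apply, Fin.default_eq_zero]
    rfl
  · rfl

variable {d : ℕ}

theorem trigPoly_eq_linearCombination (c : (Fin d → ℤ) →₀ ℂ) :
    trigPoly c = Finsupp.linearCombination ℂ (fun α (x : Td d) => ∏ i, fourier (α i) (x i)) c := by
  ext x
  simp [trigPoly, Finsupp.linearCombination_apply, Finsupp.sum]

theorem trigPoly_add (c c' : (Fin d → ℤ) →₀ ℂ) : trigPoly (c + c') = trigPoly c + trigPoly c' := by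
  simp only [trigPoly_eq_linearCombination, map_add]

theorem trigPoly_single (α : Fin d → ℤ) (a : ℂ) (x : Td d) :
    trigPoly (Finsupp.single α a) x = a * ∏ i, fourier (α i) (x i) := by
  simp [trigPoly_eq_linearCombination]

theorem continuous_trigPoly (c : (Fin d → ℤ) →₀ ℂ) : Continuous (trigPoly c) :=
  continuous_finsetSum _ fun α _ =>
    continuous_const.mul <| continuous_finsetProd _ fun i _ =>
      (map_continuous (fourier (α i))).comp (continuous_apply i)

theorem rieszCoeff_add (c c' : (Fin d → ℤ) →₀ ℂ) :
    rieszCoeff (c + c') = rieszCoeff c + rieszCoeff c' :=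
  Finsupp.filter_add

theorem rieszCoeff_single (α : Fin d → ℤ) (a : ℂ) :
    rieszCoeff (Finsupp.single α a) = if ∀ i, 0 ≤ α i then Finsupp.single α a else 0 := by
  unfold rieszCoeff; split_ifs with h
  · exact Finsupp.filter_single_of_pos _ h
  · exact Finsupp.filter_single_of_neg _ h

def rieszCoeffHead (c : (Fin (d + 1) → ℤ) →₀ ℂ) : (Fin (d + 1) → ℤ) →₀ ℂ :=
  c.filter fun α => 0 ≤ α 0

theorem rieszCoeffHead_single (α : Fin (d + 1) → ℤ) (a : ℂ) :
    rieszCoeffHead (Finsupp.single α a) = if 0 ≤ α 0 then Finsupp.single α a else 0 := by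
  unfold rieszCoeffHead; split_ifs with h
  · exact Finsupp.filter_single_of_pos _ h
  · exact Finsupp.filter_single_of_neg _ h

def freezeHead (t : AddCircle (2 * π)) : ((Fin (d + 1) → ℤ) →₀ ℂ) →ₗ[ℂ] ((Fin d → ℤ) →₀ ℂ) :=
  Finsupp.linearCombination ℂ fun α => Finsupp.single (Fin.tail α) (fourier (α 0) t)

def freezeTail (y : Td d) : ((Fin (d + 1) → ℤ) →₀ ℂ) →ₗ[ℂ] ((Fin 1 → ℤ) →₀ ℂ) :=
  Finsupp.linearCombination ℂ fun α =>
    Finsupp.single (fun _ => α 0) (∏ i, fourier (Fin.tail α i) (y i))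

theorem freezeHead_single (t : AddCircle (2 * π)) (α : Fin (d + 1) → ℤ) (a : ℂ) :
    freezeHead t (Finsupp.single α a) = Finsupp.single (Fin.tail α) (a * fourier (α 0) t) := by
  simp [freezeHead]

theorem freezeTail_single (y : Td d) (α : Fin (d + 1) → ℤ) (a : ℂ) :
    freezeTail y (Finsupp.single α a) =
      Finsupp.single (fun _ => α 0) (a * ∏ i, fourier (Fin.tail α i) (y i)) := by
  simp [freezeTail]

theorem trigPoly_freezeHead (c : (Fin (d + 1) → ℤ) →₀ ℂ) (t : AddCircle (2 * π)) (y : Td d) :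
    trigPoly (freezeHead t c) y = trigPoly c (Fin.cons t y) := by
  induction c using Finsupp.induction_linear with
  | zero => simp [trigPoly]
  | add c c' hc hc' => simp only [map_add, trigPoly_add, Pi.add_apply, hc, hc']
  | single α a =>
    rw [freezeHead_single, trigPoly_single, trigPoly_single, Fin.prod_univ_succ]
    simp only [Fin.cons_zero, Fin.cons_succ, Fin.tail]
    ring

theorem trigPoly_freezeTail (c : (Fin (d + 1) → ℤ) →₀ ℂ) (y : Td d) (t : Td 1) :
    trigPoly (freezeTail y c) t = trigPoly c (Fin.cons (t 0) y) := by
  induction c using Finsupp.induction_linear with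
  | zero => simp [trigPoly]
  | add c c' hc hc' => simp only [map_add, trigPoly_add, Pi.add_apply, hc, hc']
  | single α a =>
    rw [freezeTail_single, trigPoly_single, trigPoly_single, Fin.prod_univ_one,
      Fin.prod_univ_succ]
    simp only [Fin.cons_zero, Fin.cons_succ, Fin.tail]
    ring

theorem freezeHead_rieszCoeff (c : (Fin (d + 1) → ℤ) →₀ ℂ) (t : AddCircle (2 * π)) :
    freezeHead t (rieszCoeff c) = rieszCoeff (freezeHead t (rieszCoeffHead c)) := by
  induction c using Finsupp.induction_linear with
  | zero => simp only [rieszCoeff, rieszCoeffHead, Finsupp.filter_zero, map_zero]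
  | add c c' hc hc' =>
    simp only [rieszCoeff_add, rieszCoeffHead, Finsupp.filter_add, map_add] at *
    rw [hc, hc']
  | single α a =>
    rw [rieszCoeffHead_single, rieszCoeff_single]
    by_cases h0 : 0 ≤ α 0
    · have hα : (∀ i, 0 ≤ α i) ↔ ∀ i, 0 ≤ Fin.tail α i := by
        simp only [Fin.forall_fin_succ, h0, true_and, Fin.tail]
      rw [if_pos h0, freezeHead_single, rieszCoeff_single, apply_ite (freezeHead t), map_zero,
        freezeHead_single]
      exact if_congr hα rfl rfl
    · rw [if_neg h0, if_neg fun h => h0 (h 0), map_zero, rieszCoeff, Finsupp.filter_zero]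

theorem rieszCoeff_freezeTail (c : (Fin (d + 1) → ℤ) →₀ ℂ) (y : Td d) :
    rieszCoeff (freezeTail y c) = freezeTail y (rieszCoeffHead c) := by
  induction c using Finsupp.induction_linear with
  | zero => simp only [rieszCoeff, rieszCoeffHead, Finsupp.filter_zero, map_zero]
  | add c c' hc hc' =>
    simp only [rieszCoeff_add, rieszCoeffHead, Finsupp.filter_add, map_add] at *
    rw [hc, hc']
  | single α a =>
    rw [rieszCoeffHead_single, freezeTail_single, rieszCoeff_single, apply_ite (freezeTail y),
      map_zero, freezeTail_single]
    exact if_congr ⟨fun h => h 0, fun h _ => h⟩ rfl rfl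

end Torus

open Torus in
theorem riesz_projection_dimension_induction_general
    (d : ℕ) (p r q : ℝ≥0∞) (hpr : p ≤ r) (hrq : r ≤ q)
    (h1 : ∀ c : (Fin 1 → ℤ) →₀ ℂ,
      eLpNorm (trigPoly (rieszCoeff c)) r (muTd 1) ≤ eLpNorm (trigPoly c) q (muTd 1))
    (hdstep : ∀ c : (Fin d → ℤ) →₀ ℂ,
      eLpNorm (trigPoly (rieszCoeff c)) p (muTd d) ≤ eLpNorm (trigPoly c) r (muTd d)) :
    ∀ c : (Fin (d+1) → ℤ) →₀ ℂ,
      eLpNorm (trigPoly (rieszCoeff c)) p (muTd (d+1)) ≤ eLpNorm (trigPoly c) q (muTd (d+1)) := by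
  intro c
  have hφ := measurePreserving_cons d
  have hmeas : ∀ c' : (Fin (d + 1) → ℤ) →₀ ℂ, StronglyMeasurable
      fun z : Td 1 × Td d => trigPoly c' (Fin.cons (z.1 0) z.2) := fun c' =>
    (continuous_trigPoly c').stronglyMeasurable.comp_measurable hφ.measurable
  rw [← eLpNorm_comp_measurePreserving (continuous_trigPoly _).aestronglyMeasurable hφ,
    ← eLpNorm_comp_measurePreserving (continuous_trigPoly _).aestronglyMeasurable hφ]
  calc _ ≤ eLpNorm (fun z : Td 1 × Td d => trigPoly (rieszCoeffHead c) (Fin.cons (z.1 0) z.2)) r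
          ((muTd 1).prod (muTd d)) :=
        eLpNorm_prod_le_of_forall_eLpNorm_le (hmeas _) (hmeas _) hpr fun t => by
          simpa only [← trigPoly_freezeHead, freezeHead_rieszCoeff]
            using hdstep (freezeHead (t 0) (rieszCoeffHead c))
    _ ≤ _ :=
        eLpNorm_prod_le_of_forall_eLpNorm_le' (hmeas _) (hmeas _) hrq fun y => by
          simpa only [← trigPoly_freezeTail, rieszCoeff_freezeTail]
            using h1 (freezeTail y c)

/-- Let `d ≥ 1` and `0 < p ≤ r ≤ q ≤ ∞`.  If the Riesz projection is a
contraction from `L^q(𝕋)` to `L^r(𝕋)` on trigonometric polynomials, and from `L^r(𝕋^d)` to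
`L^p(𝕋^d)` on trigonometric polynomials, then it is a contraction from `L^q(𝕋^{d+1})` to
`L^p(𝕋^{d+1})` on trigonometric polynomials.  (Hence `𝔭_{d+1}(q) ≥ 𝔭_d(𝔭₁(q))`.) -/
theorem riesz_projection_dimension_induction
    (d : ℕ) (hd : 1 ≤ d) (p r q : ℝ≥0∞) (hp : 0 < p) (hpr : p ≤ r) (hrq : r ≤ q)
    (h1 : ∀ c : (Fin 1 → ℤ) →₀ ℂ,
      eLpNorm (trigPoly (rieszCoeff c)) r (muTd 1) ≤ eLpNorm (trigPoly c) q (muTd 1))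
    (hdstep : ∀ c : (Fin d → ℤ) →₀ ℂ,
      eLpNorm (trigPoly (rieszCoeff c)) p (muTd d) ≤ eLpNorm (trigPoly c) r (muTd d)) :
    ∀ c : (Fin (d+1) → ℤ) →₀ ℂ,
      eLpNorm (trigPoly (rieszCoeff c)) p (muTd (d+1)) ≤ eLpNorm (trigPoly c) q (muTd (d+1)) :=
  riesz_projection_dimension_induction_general d p r q hpr hrq h1 hdstep
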